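/- arXiv:quant-ph/0101028 — 3 statements merged into one kernel-verified Lean document; each statement's English description precedes it below -/
import Mathlib

section
/- Let (I,R) be an orthoframe and let Π₀ be the set of all propositions of (I,R). Then Π₀, partially ordered by set inclusion and equipped with the operation X ↦ X′, minimum ∅ and maximum I, is a complete ortholattice in which the infimum of any family F ⊆ Π₀ is ⋂F and the supremum of F is (⋃F)″. -/
/-- The orthocomplement of a set of worlds in an orthoframe `(I, R)`. -/
def ocompl {I : Type*} (R : I → I → Prop) (X : Set I) : Set I :=
  {i | ∀ j ∈ X, ¬ R i j}

/-- `X` is a proposition of the orthoframe `(I, R)`. -/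
def IsProposition {I : Type*} (R : I → I → Prop) (X : Set I) : Prop :=
  ∀ i, i ∈ X ↔ ∀ j, R i j → ∃ k ∈ X, R j k

section aux
variable {I : Type*} {R : I → I → Prop}

lemma ocompl_anti {X Y : Set I} (h : X ⊆ Y) : ocompl R Y ⊆ ocompl R X :=
  fun _ hi j hj => hi j (h hj)

lemma mem_docompl {X : Set I} {i : I} :
    i ∈ ocompl R (ocompl R X) ↔ ∀ j, R i j → ∃ k ∈ X, R j k := by
  constructor
  · intro h j hij
    by_contra hc
    push_neg at hc
    exact h j (fun k hk => fun hr => hc k hk (hr)) hij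
  · intro h j hj hij
    obtain ⟨k, hk, hjk⟩ := h j hij
    exact hj k hk hjk

lemma subset_docompl (hsymm : Symmetric R) {X : Set I} : X ⊆ ocompl R (ocompl R X) :=
  fun i hi j hj hij => hj i hi (hsymm hij)

lemma prop_iff_docompl {X : Set I} :
    IsProposition R X ↔ ocompl R (ocompl R X) = X := by
  constructor
  · intro h
    ext i
    rw [mem_docompl, ← h i]
  · intro h i
    conv_lhs => rw [← h]
    exact mem_docompl

lemma ocompl_isProp (hsymm : Symmetric R) (X : Set I) : IsProposition R (ocompl R X) := by
  rw [prop_iff_docompl]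
  exact Set.Subset.antisymm (ocompl_anti (subset_docompl hsymm)) (subset_docompl hsymm)

lemma mem_self_rhs (hsymm : Symmetric R) {X : Set I} {i : I} (hi : i ∈ X) :
    ∀ j, R i j → ∃ k ∈ X, R j k := fun j hij => ⟨i, hi, hsymm hij⟩

end aux

/-- The set `Π₀` of all propositions of an orthoframe, ordered by inclusion, with
orthocomplement `X ↦ X′`, minimum `∅` and maximum `I`, is a complete ortholattice in
which the infimum of any family `F ⊆ Π₀` is `⋂F` and the supremum of `F` is `(⋃F)″`. -/
theorem stmt_2 {I : Type*} [Nonempty I] (R : I → I → Prop)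
    (hrefl : Reflexive R) (hsymm : Symmetric R) :
    -- `∅` is the minimum and `I` the maximum of `Π₀`
    (IsProposition R (∅ : Set I) ∧ IsProposition R (Set.univ : Set I) ∧
      ∀ X : Set I, IsProposition R X → ∅ ⊆ X ∧ X ⊆ Set.univ) ∧
    -- `′` is an orthocomplement on `Π₀`
    (∀ X : Set I, IsProposition R X → IsProposition R (ocompl R X)) ∧
    (∀ X : Set I, IsProposition R X → ocompl R (ocompl R X) = X) ∧
    (∀ X Y : Set I, IsProposition R X → IsProposition R Y → X ⊆ Y →
      ocompl R Y ⊆ ocompl R X) ∧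
    (∀ X : Set I, IsProposition R X → X ∩ ocompl R X = ∅) ∧
    -- the infimum of any family `F` of propositions is `⋂F`
    (∀ F : Set (Set I), (∀ X ∈ F, IsProposition R X) →
      IsProposition R (⋂₀ F) ∧ (∀ X ∈ F, ⋂₀ F ⊆ X) ∧
      (∀ Z : Set I, IsProposition R Z → (∀ X ∈ F, Z ⊆ X) → Z ⊆ ⋂₀ F)) ∧
    -- the supremum of any family `F` of propositions is `(⋃F)″`
    (∀ F : Set (Set I), (∀ X ∈ F, IsProposition R X) →
      IsProposition R (ocompl R (ocompl R (⋃₀ F))) ∧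
      (∀ X ∈ F, X ⊆ ocompl R (ocompl R (⋃₀ F))) ∧
      (∀ Z : Set I, IsProposition R Z → (∀ X ∈ F, X ⊆ Z) →
        ocompl R (ocompl R (⋃₀ F)) ⊆ Z)) := by
  refine ⟨⟨?_, ?_, fun X _ => ⟨Set.empty_subset X, Set.subset_univ X⟩⟩,
    fun X _ => ocompl_isProp hsymm X, fun X hX => prop_iff_docompl.mp hX,
    fun X Y _ _ h => ocompl_anti h, ?_, ?_, ?_⟩
  · intro i
    simp only [Set.mem_empty_iff_false, false_iff]
    push_neg
    exact ⟨i, hrefl i, fun k hk => hk.elim⟩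
  · intro i
    simp only [Set.mem_univ, true_iff]
    exact fun j hij => ⟨j, trivial, hrefl j⟩
  · intro X _
    ext i
    simp only [Set.mem_inter_iff, Set.mem_empty_iff_false, iff_false, not_and]
    intro hi hoc
    exact hoc i hi (hrefl i)
  · intro F hF
    refine ⟨?_, fun X hX => Set.sInter_subset_of_mem hX,
      fun Z _ hZ => Set.subset_sInter hZ⟩
    intro i
    constructor
    · exact fun hi => mem_self_rhs hsymm hi
    · intro h
      intro X hX
      rw [hF X hX i]
      intro j hij
      obtain ⟨k, hk, hjk⟩ := h j hij
      exact ⟨k, hk X hX, hjk⟩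
  · intro F hF
    refine ⟨ocompl_isProp hsymm _, fun X hX =>
      (Set.subset_sUnion_of_mem hX).trans (subset_docompl hsymm), ?_⟩
    intro Z hZ h
    have : ⋃₀ F ⊆ Z := Set.sUnion_subset h
    calc ocompl R (ocompl R (⋃₀ F)) ⊆ ocompl R (ocompl R Z) :=
          ocompl_anti (ocompl_anti this)
      _ = Z := prop_iff_docompl.mp hZ
end

section
/- Let H be an infinite-dimensional separable complex Hilbert space and let Y be an infinite-dimensional (not necessarily closed) linear subspace of H. Consider the first-order language L² with a single binary relation symbol, and the L²-structure whose universe is H⁺ = {ψ ∈ H : ψ ≠ 0} and which interprets the relation symbol as non-orthogonality: ψ and φ are related iff ⟪ψ,φ⟫ ≠ 0. Then for every L²-formula α(x₁,…,xₙ,y) and all ψ₁,…,ψₙ ∈ Y ∖ {0}: if there exists φ ∈ H⁺ such that H⁺ ⊨ α[ψ₁,…,ψₙ,φ], then there exists ψ ∈ Y ∖ {0} such that H⁺ ⊨ α[ψ₁,…,ψₙ,ψ]. (By the Tarski–Vaught test, Y ∖ {0} is therefore an elementary substructure of H⁺.) -/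
open FirstOrder

/-- The relation symbols of the first-order language `L²`: a single binary
relation symbol. -/
inductive L2Rel : ℕ → Type
  | rel : L2Rel 2

/-- The first-order language `L²` with exactly one binary relation symbol. -/
def L2 : FirstOrder.Language := ⟨fun _ => Empty, L2Rel⟩

/-- The `L²`-structure on the nonzero vectors of an inner product space, where
the binary relation symbol is interpreted as non-orthogonality. -/
noncomputable instance L2HilbertStructure {H : Type*} [NormedAddCommGroup H]
    [InnerProductSpace ℂ H] : L2.Structure {ψ : H // ψ ≠ 0} where
  funMap := fun f _ => f.elim
  RelMap := fun r v =>
    match r with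
    | L2Rel.rel => inner ℂ ((v 0 : {ψ : H // ψ ≠ 0}) : H) ((v 1 : {ψ : H // ψ ≠ 0}) : H) ≠ (0 : ℂ)

noncomputable section
variable {H : Type*} [NormedAddCommGroup H] [InnerProductSpace ℂ H] [CompleteSpace H]

local notation "⟪" x ", " y "⟫" => @inner ℂ _ _ x y

/-- Extend a unitary of a finite-dimensional subspace by the identity on the complement. -/
lemma aux_extend (K : Submodule ℂ H) [FiniteDimensional ℂ K] (g : K ≃ₗᵢ[ℂ] K) :
    ∃ U : H ≃ₗᵢ[ℂ] H, (∀ x : K, U x = g x) ∧ ∀ x ∈ Kᗮ, U x = x := by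
  haveI : CompleteSpace K := FiniteDimensional.complete ℂ K
  set P := K.orthogonalProjectionOnto with hP
  let M : H →ₗ[ℂ] H := K.subtype.comp (g.toLinearEquiv.toLinearMap.comp P.toLinearMap)
    + (LinearMap.id - K.subtype.comp P.toLinearMap)
  let M' : H →ₗ[ℂ] H := K.subtype.comp (g.symm.toLinearEquiv.toLinearMap.comp P.toLinearMap)
    + (LinearMap.id - K.subtype.comp P.toLinearMap)
  have hM : ∀ x : H, M x = (g (P x) : H) + (x - (P x : H)) := fun x => rfl
  have hM' : ∀ x : H, M' x = (g.symm (P x) : H) + (x - (P x : H)) := fun x => rfl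
  have hPM : ∀ x : H, P (M x) = g (P x) := by
    intro x
    rw [hM, map_add, Submodule.orthogonalProjectionOnto_mem_subspace_eq_self,
      Submodule.orthogonalProjectionOnto_apply_of_mem_orthogonal
        (show x - (P x : H) ∈ Kᗮ from Submodule.sub_starProjection_mem_orthogonal x), add_zero]
  have hPM' : ∀ x : H, P (M' x) = g.symm (P x) := by
    intro x
    rw [hM', map_add, Submodule.orthogonalProjectionOnto_mem_subspace_eq_self,
      Submodule.orthogonalProjectionOnto_apply_of_mem_orthogonal
        (show x - (P x : H) ∈ Kᗮ from Submodule.sub_starProjection_mem_orthogonal x), add_zero]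
  have hMM' : ∀ x : H, M (M' x) = x := by
    intro x
    rw [hM, hPM', LinearIsometryEquiv.apply_symm_apply, hM']
    abel
  have hM'M : ∀ x : H, M' (M x) = x := by
    intro x
    rw [hM', hPM, LinearIsometryEquiv.symm_apply_apply, hM]
    abel
  have hinner : ∀ x y : H, ⟪M x, M y⟫ = ⟪x, y⟫ := by
    intro x y
    have h1 : ∀ a b : H, a ∈ K → b ∈ Kᗮ → ⟪a, b⟫ = 0 := fun a b ha hb =>
      Submodule.inner_right_of_mem_orthogonal ha hb
    have h2 : ∀ a b : H, a ∈ Kᗮ → b ∈ K → ⟪a, b⟫ = 0 := fun a b ha hb =>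
      Submodule.inner_left_of_mem_orthogonal hb ha
    have hx : x - (P x : H) ∈ Kᗮ := Submodule.sub_starProjection_mem_orthogonal (K := K) x
    have hy : y - (P y : H) ∈ Kᗮ := Submodule.sub_starProjection_mem_orthogonal (K := K) y
    have e1 : ⟪(g (P x) : H), (g (P y) : H)⟫ = ⟪(P x : H), (P y : H)⟫ := by
      rw [← Submodule.coe_inner, ← Submodule.coe_inner, LinearIsometryEquiv.inner_map_map]
    calc ⟪M x, M y⟫
        = ⟪(g (P x) : H), (g (P y) : H)⟫ + ⟪(g (P x) : H), y - (P y : H)⟫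
          + (⟪x - (P x : H), (g (P y) : H)⟫ + ⟪x - (P x : H), y - (P y : H)⟫) := by
          rw [hM, hM, inner_add_left, inner_add_right, inner_add_right]
      _ = ⟪(P x : H), (P y : H)⟫ + ⟪(P x : H), y - (P y : H)⟫
          + (⟪x - (P x : H), (P y : H)⟫ + ⟪x - (P x : H), y - (P y : H)⟫) := by
          simp only [e1, h1 _ _ (g (P x)).2 hy, h1 _ _ (P x).2 hy,
            h2 _ _ hx (g (P y)).2, h2 _ _ hx (P y).2]
      _ = ⟪(P x : H) + (x - (P x : H)), (P y : H) + (y - (P y : H))⟫ := by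
          rw [inner_add_left, inner_add_right, inner_add_right]
      _ = ⟪x, y⟫ := by rw [add_sub_cancel, add_sub_cancel]
  let E : H ≃ₗ[ℂ] H := LinearEquiv.ofLinear M M' (by ext x; exact hMM' x) (by ext x; exact hM'M x)
  refine ⟨E.isometryOfInner hinner, fun x => ?_, fun x hx => ?_⟩
  · show M x = g x
    rw [hM, Submodule.orthogonalProjectionOnto_mem_subspace_eq_self, sub_self, add_zero]
  · show M x = x
    rw [hM, Submodule.orthogonalProjectionOnto_apply_of_mem_orthogonal hx]
    simp

/-- A unitary of `H` mapping `u` to `u'` (equal norms) and fixing everything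
orthogonal to both. -/
lemma aux_transitive (u u' : H) (hu : u ≠ 0) (hu' : u' ≠ 0) (h : ‖u‖ = ‖u'‖) :
    ∃ U : H ≃ₗᵢ[ℂ] H, U u = u' ∧
      ∀ x : H, ⟪u, x⟫ = 0 → ⟪u', x⟫ = 0 → U x = x := by
  set K : Submodule ℂ H := Submodule.span ℂ {u, u'} with hK
  haveI : FiniteDimensional ℂ K :=
    FiniteDimensional.span_of_finite ℂ (Set.toFinite _)
  have huK : u ∈ K := Submodule.subset_span (by simp)
  have hu'K : u' ∈ K := Submodule.subset_span (by simp)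
  set d := Module.finrank ℂ K with hd
  haveI : Nontrivial K := ⟨⟨u, huK⟩, 0, by simpa [Subtype.ext_iff] using hu⟩
  have hdpos : 0 < d := hd ▸ Module.finrank_pos_iff.2 inferInstance
  haveI : NeZero d := ⟨hdpos.ne'⟩
  have hcard : Module.finrank ℂ K = Fintype.card (Fin d) := by simp [hd]
  have hnorm : ∀ (w : H) (hw : w ≠ 0) (hwK : w ∈ K),
      Orthonormal ℂ (({0} : Set (Fin d)).restrict
        (fun _ : Fin d => (‖w‖⁻¹ : ℂ) • (⟨w, hwK⟩ : K))) := by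
    intro w hw hwK
    constructor
    · intro i
      have h1 : ‖(⟨w, hwK⟩ : K)‖ = ‖w‖ := rfl
      show ‖(‖w‖⁻¹ : ℂ) • (⟨w, hwK⟩ : K)‖ = 1
      simp only [Set.restrict_apply, norm_smul, h1, norm_inv, Complex.norm_real, Real.norm_eq_abs,
        abs_inv, abs_norm]
      exact inv_mul_cancel₀ (norm_ne_zero_iff.2 hw)
    · intro i j hij
      exact absurd (Subtype.ext ((Set.eq_of_mem_singleton i.2).trans
        (Set.eq_of_mem_singleton j.2).symm)) hij
  obtain ⟨b, hb⟩ := (hnorm u hu huK).exists_orthonormalBasis_extension_of_card_eq hcard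
  obtain ⟨b', hb'⟩ := (hnorm u' hu' hu'K).exists_orthonormalBasis_extension_of_card_eq hcard
  let g : K ≃ₗᵢ[ℂ] K := b.repr.trans b'.repr.symm
  have hg : g ⟨u, huK⟩ = ⟨u', hu'K⟩ := by
    have hb0 : b 0 = (‖u‖⁻¹ : ℂ) • (⟨u, huK⟩ : K) := hb 0 rfl
    have hb'0 : b' 0 = (‖u'‖⁻¹ : ℂ) • (⟨u', hu'K⟩ : K) := hb' 0 rfl
    have hgb : g (b 0) = b' 0 := by
      show b'.repr.symm (b.repr (b 0)) = b' 0
      rw [b.repr_self, b'.repr_symm_single]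
    have h0 : (⟨u, huK⟩ : K) = (‖u‖ : ℂ) • ((‖u‖⁻¹ : ℂ) • (⟨u, huK⟩ : K)) := by
      rw [smul_smul, mul_inv_cancel₀ (by simpa using hu), one_smul]
    rw [h0, map_smul, ← hb0, hgb, hb'0, smul_smul, h,
      mul_inv_cancel₀ (by simpa using hu'), one_smul]
  obtain ⟨U, hU1, hU2⟩ := aux_extend K g
  refine ⟨U, by simpa [hg] using hU1 ⟨u, huK⟩, fun x hx hx' => ?_⟩
  refine hU2 x ?_
  rw [Submodule.mem_orthogonal]
  intro y hy
  induction hy using Submodule.span_induction with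
  | mem z hz => rcases hz with rfl | rfl
                · exact hx
                · exact hx'
  | zero => simp
  | add a c _ _ ha hc => rw [inner_add_left, ha, hc, add_zero]
  | smul t a _ ha => rw [inner_smul_left, ha, mul_zero]

end

/-- A unitary of `H` induces an automorphism of the `L²`-structure `H⁺`. -/
noncomputable def L2EquivOfUnitary {H : Type*} [NormedAddCommGroup H]
    [InnerProductSpace ℂ H] (U : H ≃ₗᵢ[ℂ] H) :
    ({ψ : H // ψ ≠ 0}) ≃[L2] ({ψ : H // ψ ≠ 0}) where
  toFun := fun x => ⟨U x, fun h0 => x.2 (by simpa using congrArg U.symm h0)⟩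
  invFun := fun x => ⟨U.symm x, fun h0 => x.2 (by simpa using congrArg U h0)⟩
  left_inv := fun x => Subtype.ext (U.symm_apply_apply x)
  right_inv := fun x => Subtype.ext (U.apply_symm_apply x)
  map_fun' := fun f _ => f.elim
  map_rel' := by
    intro n r x
    cases r
    show (inner ℂ (U (x 0 : {ψ : H // ψ ≠ 0})) (U (x 1 : {ψ : H // ψ ≠ 0})) ≠ (0 : ℂ)) ↔ _
    rw [LinearIsometryEquiv.inner_map_map]
    rfl

/-- Goldblatt's key lemma: if `H` is an infinite-dimensional separable complex
Hilbert space, `Y` an infinite-dimensional (not necessarily closed) subspace,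
then any `L²`-formula `α(x₁,…,xₙ,y)` whose parameters lie in `Y ∖ {0}` that is
satisfied in `H⁺` by some witness `φ ∈ H⁺` is satisfied by a witness in `Y ∖ {0}`. -/
theorem stmt_8 {H : Type*} [NormedAddCommGroup H] [InnerProductSpace ℂ H]
    [CompleteSpace H] [TopologicalSpace.SeparableSpace H]
    (hinf : ¬ FiniteDimensional ℂ H)
    (Y : Submodule ℂ H) (hY : ¬ FiniteDimensional ℂ Y)
    (n : ℕ) (α : L2.Formula (Fin n ⊕ Fin 1))
    (ψs : Fin n → {ψ : H // ψ ≠ 0}) (hψs : ∀ i, ((ψs i : H) ∈ Y))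
    (hsat : ∃ φ : {ψ : H // ψ ≠ 0}, α.Realize (Sum.elim ψs fun _ => φ)) :
    ∃ ψ : {ψ : H // ψ ≠ 0}, (ψ : H) ∈ Y ∧ α.Realize (Sum.elim ψs fun _ => ψ) := by
  classical
  obtain ⟨φ, hφ⟩ := hsat
  set W : Submodule ℂ H := Submodule.span ℂ (Set.range fun i => (ψs i : H)) with hW
  haveI : FiniteDimensional ℂ W := FiniteDimensional.span_of_finite ℂ (Set.finite_range _)
  haveI : CompleteSpace W := FiniteDimensional.complete ℂ W
  have hWY : W ≤ Y := Submodule.span_le.2 (by rintro _ ⟨i, rfl⟩; exact hψs i)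
  by_cases hmem : (φ : H) ∈ W
  · exact ⟨φ, hWY hmem, hφ⟩
  set P := W.orthogonalProjectionOnto with hP
  set u : H := (φ : H) - P φ with hu_def
  have hu0 : u ≠ 0 := by
    intro h0
    apply hmem
    have heq : (φ : H) = (P φ : H) := by rwa [← sub_eq_zero]
    rw [heq]
    exact (P φ).2
  have huW : u ∈ Wᗮ := Submodule.sub_starProjection_mem_orthogonal _
  -- find a nonzero element of `Y` orthogonal to `W`
  obtain ⟨y, hy0, hyW⟩ : ∃ y : Y, y ≠ 0 ∧ ((y : H) ∈ Wᗮ) := by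
    by_contra hcon
    push_neg at hcon
    refine hY (FiniteDimensional.of_injective ((P : H →ₗ[ℂ] W).comp Y.subtype) ?_)
    refine (injective_iff_map_eq_zero _).2 fun a ha => ?_
    by_contra ha0
    exact absurd ((Submodule.orthogonalProjectionOnto_eq_zero_iff (v := (a : H))).1 ha) (hcon a ha0)
  have hyH0 : (y : H) ≠ 0 := fun h0 => hy0 (Subtype.ext h0)
  set c : ℂ := ((‖u‖ / ‖(y : H)‖ : ℝ) : ℂ) with hc
  have hc0 : c ≠ 0 := by
    simp only [hc, Ne, Complex.ofReal_eq_zero, div_eq_zero_iff, norm_eq_zero]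
    tauto
  set u' : H := c • (y : H) with hu'
  have hu'Y : u' ∈ Y := Y.smul_mem _ y.2
  have hu'W : u' ∈ Wᗮ := Wᗮ.smul_mem _ hyW
  have hu'0 : u' ≠ 0 := smul_ne_zero hc0 hyH0
  have hnorm : ‖u‖ = ‖u'‖ := by
    rw [hu', norm_smul, hc, Complex.norm_real, Real.norm_eq_abs,
      abs_of_nonneg (div_nonneg (norm_nonneg _) (norm_nonneg _)),
      div_mul_cancel₀ _ (norm_ne_zero_iff.2 hyH0)]
  obtain ⟨U, hUu, hUfix⟩ := aux_transitive u u' hu0 hu'0 hnorm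
  have hfixW : ∀ w ∈ W, U w = w := fun w hw =>
    hUfix w (Submodule.inner_left_of_mem_orthogonal hw huW)
      (Submodule.inner_left_of_mem_orthogonal hw hu'W)
  set e := L2EquivOfUnitary U with he
  refine ⟨e φ, ?_, ?_⟩
  · show U (φ : H) ∈ Y
    have hdecomp : U (φ : H) = (P φ : H) + u' := by
      have h1 : (φ : H) = (P φ : H) + u := by rw [hu_def]; abel
      rw [congrArg U h1, map_add, hfixW _ (P φ).2, hUu]
    rw [hdecomp]
    exact Y.add_mem (hWY (P φ).2) hu'Y
  · have hcomp : Sum.elim ψs (fun _ : Fin 1 => e φ) = e ∘ Sum.elim ψs (fun _ => φ) := by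
      funext i
      cases i with
      | inl i =>
        exact (Subtype.ext (hfixW _ (Submodule.subset_span ⟨i, rfl⟩))).symm
      | inr _ => rfl
    rw [hcomp, FirstOrder.Language.StrongHomClass.realize_formula]
    exact hφ
end

section
/- Let H be a complex Hilbert space and let A, B, C be closed linear subspaces of H. In the orthomodular lattice of closed subspaces of H (meet = intersection, join U ⊔ V = the topological closure of U + V, orthocomplement = ᗮ), the orthoarguesian law holds: A ≤ B ⊔ ((A ⩀ Bᗮ) ⊓ ((A ⩀ Cᗮ) ⊔ ((B ⊔ C) ⊓ ((A ⩀ Bᗮ) ⊔ (A ⩀ Cᗮ))))), where X ⩀ Y := (X ⊔ Yᗮ) ⊓ Y is the Sasaki projection. -/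
open Submodule

/-- The join of two subspaces in the lattice of closed subspaces of a Hilbert
space: the topological closure of their sum. -/
def cjoin {H : Type*} [NormedAddCommGroup H] [InnerProductSpace ℂ H]
    (U V : Submodule ℂ H) : Submodule ℂ H :=
  (U ⊔ V).topologicalClosure

/-- The Sasaki projection `X ⩀ Y := (X ⊔ Yᗮ) ⊓ Y` in the lattice of closed
subspaces (join taken as closure of the sum). -/
noncomputable def sasaki {H : Type*} [NormedAddCommGroup H] [InnerProductSpace ℂ H]
    (X Y : Submodule ℂ H) : Submodule ℂ H :=
  cjoin X Yᗮ ⊓ Y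

lemma le_cjoin {H : Type*} [NormedAddCommGroup H] [InnerProductSpace ℂ H]
    (U V : Submodule ℂ H) : U ⊔ V ≤ cjoin U V :=
  Submodule.le_topologicalClosure _

/-- The orthoarguesian law holds in the orthomodular lattice of closed
subspaces of a complex Hilbert space. -/
theorem stmt_13 {H : Type*} [NormedAddCommGroup H] [InnerProductSpace ℂ H]
    [CompleteSpace H] (A B C : Submodule ℂ H)
    (hA : IsClosed (A : Set H)) (hB : IsClosed (B : Set H))
    (hC : IsClosed (C : Set H)) :
    A ≤ cjoin B (sasaki A Bᗮ ⊓
      cjoin (sasaki A Cᗮ) (cjoin B C ⊓ cjoin (sasaki A Bᗮ) (sasaki A Cᗮ))) := by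
  haveI : CompleteSpace B := hB.completeSpace_coe
  haveI : CompleteSpace C := hC.completeSpace_coe
  intro x hx
  obtain ⟨b, hb, b', hb', hxb⟩ := B.exists_add_mem_mem_orthogonal x
  obtain ⟨c, hc, c', hc', hxc⟩ := C.exists_add_mem_mem_orthogonal x
  -- b' ∈ sasaki A Bᗮ
  have hbs : b' ∈ sasaki A Bᗮ := by
    refine ⟨le_cjoin A Bᗮᗮ ?_, hb'⟩
    have : b' = x - b := by rw [hxb]; abel
    rw [this]
    exact sub_mem (mem_sup_left hx)
      (mem_sup_right (B.le_orthogonal_orthogonal hb))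
  have hcs : c' ∈ sasaki A Cᗮ := by
    refine ⟨le_cjoin A Cᗮᗮ ?_, hc'⟩
    have : c' = x - c := by rw [hxc]; abel
    rw [this]
    exact sub_mem (mem_sup_left hx)
      (mem_sup_right (C.le_orthogonal_orthogonal hc))
  -- b' - c' ∈ cjoin B C ⊓ cjoin (sasaki A Bᗮ) (sasaki A Cᗮ)
  have hdiff : b' - c' ∈ cjoin B C ⊓ cjoin (sasaki A Bᗮ) (sasaki A Cᗮ) := by
    constructor
    · have : b' - c' = c - b := by
        have := hxb.symm.trans hxc
        linear_combination (norm := abel) this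
      rw [this]
      exact le_cjoin B C (sub_mem (mem_sup_right hc) (mem_sup_left hb))
    · exact le_cjoin _ _ (sub_mem (mem_sup_left hbs) (mem_sup_right hcs))
  have hbig : b' ∈ sasaki A Bᗮ ⊓
      cjoin (sasaki A Cᗮ) (cjoin B C ⊓ cjoin (sasaki A Bᗮ) (sasaki A Cᗮ)) := by
    refine ⟨hbs, ?_⟩
    have : b' = c' + (b' - c') := by abel
    rw [this]
    exact le_cjoin _ _ (add_mem (mem_sup_left hcs) (mem_sup_right hdiff))
  rw [hxb]
  exact le_cjoin _ _ (add_mem (mem_sup_left hb) (mem_sup_right hbig))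
end
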